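/- Let f be continuous on the unit circle bΔ and suppose f extends to a holomorphic function F on the open unit disc, continuous on the closed disc. For any w ∈ ℂ with |w| > 1 and any polynomial P, if z ↦ f(z)/(z−w) + P(z) is nonvanishing on bΔ, then its winding number around 0 equals the number of zeros of z ↦ F(z) + (z−w)P(z) in the open unit disc, counted with multiplicity. -/

import Mathlib

open Polynomial Metric
open scoped Classical

/-- `g` (restricted to the unit circle) has winding number `n` around `0`:
there is a continuous argument lift `α` along `θ ↦ g (exp (iθ))` whose total
increase over `[0, 2π]` is `2πn`. -/
def HasWindingNumber (g : ℂ → ℂ) (n : ℤ) : Prop :=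
  ∃ α : ℝ → ℝ, Continuous α ∧
    (∀ θ : ℝ, g (Complex.exp (θ * Complex.I)) =
      (‖g (Complex.exp (θ * Complex.I))‖ : ℂ) * Complex.exp (α θ * Complex.I)) ∧
    α (2 * Real.pi) - α 0 = n * (2 * Real.pi)

/-- `f` on the unit circle extends continuously to the closed unit disc,
holomorphically on the open unit disc. -/
def ExtendsHolo (f : ℂ → ℂ) : Prop :=
  ∃ F : ℂ → ℂ, ContinuousOn F (closedBall 0 1) ∧
    DifferentiableOn ℂ F (ball 0 1) ∧ ∀ z ∈ sphere (0:ℂ) 1, F z = f z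

/-- Multiplicity of a zero of a (holomorphic) function: least `n` with
nonvanishing `n`-th derivative. -/
noncomputable def holoOrder (f : ℂ → ℂ) (z : ℂ) : ℕ :=
  sInf {n | iteratedDeriv n f z ≠ 0}

open Filter Set

/-! On the circle, `f / (z - w) + P = G · (z - w)⁻¹` with `G = F + (z - w) P`. A function that is
continuous and nonvanishing on the closed disc has winding number `0` (shrink the circle to its
centre); this applies to `(z - w)⁻¹` since `|w| > 1`. For `G`, divide out its zeros one linear
factor `z - z₀` at a time using `dslope`: each factor winds once around `0`, and once no zeros are
left the quotient is nonvanishing on the closed disc. -/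

theorem exp_ofReal_mul_I_mem_sphere (θ : ℝ) : Complex.exp (θ * Complex.I) ∈ sphere (0 : ℂ) 1 := by
  simp [Complex.norm_exp_ofReal_mul_I]

theorem ContinuousOn.comp_exp_ofReal_mul_I {g : ℂ → ℂ} (hg : ContinuousOn g (sphere 0 1)) :
    Continuous fun θ : ℝ => g (Complex.exp (θ * Complex.I)) :=
  hg.comp_continuous (by fun_prop) exp_ofReal_mul_I_mem_sphere

theorem ofReal_mul_mem_closedBall {ρ : ℝ} (hρ : ρ ∈ Icc (0 : ℝ) 1) {z : ℂ}
    (hz : z ∈ sphere (0 : ℂ) 1) : (ρ : ℂ) * z ∈ closedBall (0 : ℂ) 1 := by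
  simpa [mem_sphere_zero_iff_norm.1 hz, abs_of_nonneg hρ.1] using hρ.2

namespace HasWindingNumber

variable {g h : ℂ → ℂ} {m n : ℤ}

theorem congr (hg : HasWindingNumber g n) (hgh : EqOn g h (sphere 0 1)) :
    HasWindingNumber h n := by
  obtain ⟨α, hαc, hα, hα2π⟩ := hg
  refine ⟨α, hαc, fun θ => ?_, hα2π⟩
  rw [← hgh (exp_ofReal_mul_I_mem_sphere θ)]
  exact hα θ

theorem mul (hg : HasWindingNumber g m) (hh : HasWindingNumber h n) :
    HasWindingNumber (fun z => g z * h z) (m + n) := by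
  obtain ⟨α, hαc, hα, hα2π⟩ := hg
  obtain ⟨β, hβc, hβ, hβ2π⟩ := hh
  refine ⟨α + β, hαc.add hβc, fun θ => ?_, ?_⟩
  · show g _ * h _ = _
    conv_lhs => rw [hα θ, hβ θ]
    rw [norm_mul, Pi.add_apply]
    push_cast [add_mul, Complex.exp_add]
    ring
  · simp only [Pi.add_apply]
    push_cast
    linarith

theorem const (c : ℂ) : HasWindingNumber (fun _ => c) 0 :=
  ⟨fun _ => c.arg, continuous_const, fun _ => (Complex.norm_mul_exp_arg_mul_I c).symm, by simp⟩

theorem id : HasWindingNumber (fun z => z) 1 :=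
  ⟨fun θ => θ, continuous_id, fun θ => by simp [Complex.norm_exp_ofReal_mul_I], by simp⟩

theorem of_mapsTo_slitPlane (hg : ContinuousOn g (sphere 0 1))
    (hgs : MapsTo g (sphere 0 1) Complex.slitPlane) : HasWindingNumber g 0 := by
  refine ⟨fun θ => (g (Complex.exp (θ * Complex.I))).arg, ?_,
    fun θ => (Complex.norm_mul_exp_arg_mul_I _).symm, ?_⟩
  · refine continuous_iff_continuousAt.2 fun θ => ?_
    exact ContinuousAt.comp (g := Complex.arg)
      (Complex.continuousAt_arg (hgs (exp_ofReal_mul_I_mem_sphere θ)))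
      hg.comp_exp_ofReal_mul_I.continuousAt
  · have : Complex.exp (((2 * Real.pi : ℝ) : ℂ) * Complex.I) =
        Complex.exp ((0 : ℝ) * Complex.I) := by
      push_cast
      rw [Complex.exp_two_pi_mul_I, zero_mul, Complex.exp_zero]
    simp only [this, sub_self, Int.cast_zero, zero_mul]

/-- Dog on a leash: `g = h · (g / h)` and `g / h` stays in the disc `ball 1 1`. -/
theorem of_norm_sub_lt (hh : HasWindingNumber h n) (hgc : ContinuousOn g (sphere 0 1))
    (hhc : ContinuousOn h (sphere 0 1)) (hlt : ∀ z ∈ sphere 0 1, ‖g z - h z‖ < ‖h z‖) :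
    HasWindingNumber g n := by
  have hh0 : ∀ z ∈ sphere (0 : ℂ) 1, h z ≠ 0 := fun z hz =>
    norm_pos_iff.1 ((norm_nonneg _).trans_lt (hlt z hz))
  have hquot : HasWindingNumber (fun z => g z / h z) 0 := by
    refine of_mapsTo_slitPlane (hgc.div hhc hh0) fun z hz => Complex.ball_one_subset_slitPlane ?_
    rw [mem_ball, dist_eq_norm, div_sub_one (hh0 z hz), norm_div]
    exact (div_lt_one (norm_pos_iff.2 (hh0 z hz))).2 (hlt z hz)
  simpa using (hh.mul hquot).congr fun z hz => mul_div_cancel₀ (g z) (hh0 z hz)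

theorem sub_const {a : ℂ} (ha : ‖a‖ < 1) : HasWindingNumber (fun z => z - a) 1 :=
  id.of_norm_sub_lt (by fun_prop) (by fun_prop) fun z hz => by
    simpa [mem_sphere_zero_iff_norm.1 hz] using ha

/-- By uniform continuity, the loops `z ↦ g (ρ z)` for nearby radii `ρ` are leashed to each other,
and at `ρ = 0` the loop is constant. -/
theorem of_continuousOn_closedBall (hg : ContinuousOn g (closedBall 0 1))
    (hg0 : ∀ z ∈ closedBall (0 : ℂ) 1, g z ≠ 0) : HasWindingNumber g 0 := by
  obtain ⟨z₀, hz₀, hmin⟩ := (isCompact_closedBall (0 : ℂ) 1).exists_isMinOn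
    (nonempty_closedBall.2 zero_le_one) (continuous_norm.comp_continuousOn hg)
  obtain ⟨δ, hδ, hδg⟩ := Metric.uniformContinuousOn_iff.1
    ((isCompact_closedBall (0 : ℂ) 1).uniformContinuousOn_of_continuous hg) _
    (norm_pos_iff.2 (hg0 z₀ hz₀))
  have hcont : ∀ ρ ∈ Icc (0 : ℝ) 1, ContinuousOn (fun z => g (ρ * z)) (sphere 0 1) :=
    fun ρ hρ => hg.comp (by fun_prop) fun z hz => ofReal_mul_mem_closedBall hρ hz
  have hnear : ∀ ρ ∈ Icc (0 : ℝ) 1, ∀ ρ' ∈ Icc (0 : ℝ) 1, dist ρ' ρ < δ →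
      HasWindingNumber (fun z => g (ρ * z)) 0 → HasWindingNumber (fun z => g (ρ' * z)) 0 := by
    refine fun ρ hρ ρ' hρ' hd hwind => hwind.of_norm_sub_lt (hcont ρ' hρ') (hcont ρ hρ)
      fun z hz => ?_
    have hdist : dist ((ρ' : ℂ) * z) (ρ * z) < δ := by
      rwa [dist_eq_norm, ← sub_mul, norm_mul, mem_sphere_zero_iff_norm.1 hz, mul_one,
        ← Complex.ofReal_sub, Complex.norm_real, ← dist_eq_norm]
    rw [← dist_eq_norm]
    exact (hδg _ (ofReal_mul_mem_closedBall hρ' hz) _ (ofReal_mul_mem_closedBall hρ hz)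
      hdist).trans_le (hmin (ofReal_mul_mem_closedBall hρ hz))
  have hshrink := isPreconnected_Icc.induction₂'
    (fun ρ ρ' : ℝ => HasWindingNumber (fun z => g (ρ * z)) 0 →
      HasWindingNumber (fun z => g (ρ' * z)) 0)
    (fun ρ hρ => by
      filter_upwards [self_mem_nhdsWithin, nhdsWithin_le_nhds (Metric.ball_mem_nhds ρ hδ)]
        with ρ' hρ' hd
      exact ⟨hnear ρ hρ ρ' hρ' hd, hnear ρ' hρ' ρ hρ (by rwa [dist_comm])⟩)
    (fun _ _ _ _ _ _ h₁ h₂ => h₂ ∘ h₁) (left_mem_Icc.2 zero_le_one) (right_mem_Icc.2 zero_le_one)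
  simpa using hshrink (by simpa using const (g 0))

end HasWindingNumber

theorem analyticOrderNatAt_sub_mul {𝕜 : Type*} [NontriviallyNormedField 𝕜] {f : 𝕜 → 𝕜}
    {z z₀ : 𝕜} (hf : AnalyticAt 𝕜 f z) (hf' : analyticOrderAt f z ≠ ⊤) :
    analyticOrderNatAt (fun u => (u - z₀) * f u) z =
      (if z = z₀ then 1 else 0) + analyticOrderNatAt f z := by
  have hlin : analyticOrderAt (· - z₀) z = if z = z₀ then 1 else 0 := by
    split_ifs with h
    · rw [h, analyticOrderAt_id_sub_const_self]
    · exact analyticOrderAt_id_sub_const_of_ne h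
  rw [show (fun u => (u - z₀) * f u) = (· - z₀) * f from rfl,
    analyticOrderNatAt_mul (by fun_prop) hf (by split_ifs at hlin <;> simp [hlin]) hf',
    analyticOrderNatAt, hlin]
  split_ifs <;> rfl

theorem holoOrder_eq_analyticOrderNatAt {f : ℂ → ℂ} {z : ℂ} (hf : AnalyticAt ℂ f z)
    (hf' : analyticOrderAt f z ≠ ⊤) : holoOrder f z = analyticOrderNatAt f z := by
  set n := analyticOrderNatAt f z
  have hn : (n : ℕ∞) = analyticOrderAt f z := Nat.cast_analyticOrderNatAt hf'
  have hlow : ∀ i < n, iteratedDeriv i f z = 0 :=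
    (natCast_le_analyticOrderAt_iff_iteratedDeriv_eq_zero hf).1 hn.le
  have hne : iteratedDeriv n f z ≠ 0 := fun h => by
    have := (natCast_le_analyticOrderAt_iff_iteratedDeriv_eq_zero hf (n := n + 1)).2 fun i hi =>
      (Nat.lt_succ_iff_lt_or_eq.1 hi).elim (hlow i) (· ▸ h)
    rw [← hn] at this
    norm_cast at this
    omega
  exact le_antisymm (Nat.sInf_le hne) (le_csInf ⟨n, hne⟩ fun k hk => not_lt.1 fun h => hk (hlow k h))

section ClosedDisc

variable {G : ℂ → ℂ}

theorem ContinuousOn.not_eqOn_zero_ball (hGc : ContinuousOn G (closedBall 0 1)) {z : ℂ}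
    (hz : z ∈ sphere (0 : ℂ) 1) (hGz : G z ≠ 0) : ¬EqOn G 0 (ball 0 1) := fun h =>
  hGz (h.of_subset_closure hGc continuousOn_const ball_subset_closedBall
    (closure_ball (0 : ℂ) one_ne_zero).ge (sphere_subset_closedBall hz))

variable (hGc : ContinuousOn G (closedBall 0 1)) (hGd : DifferentiableOn ℂ G (ball 0 1))
  (hG1 : ∀ z ∈ sphere (0 : ℂ) 1, G z ≠ 0)
include hGc hGd hG1

theorem analyticOrderAt_ne_top_of_mem_ball {z : ℂ} (hz : z ∈ ball (0 : ℂ) 1) :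
    analyticOrderAt G z ≠ ⊤ := fun h =>
  hGc.not_eqOn_zero_ball (by simp : (1 : ℂ) ∈ sphere 0 1) (hG1 1 (by simp))
    ((hGd.analyticOnNhd isOpen_ball).eqOn_zero_of_preconnected_of_eventuallyEq_zero
      (convex_ball 0 1).isPreconnected hz (analyticOrderAt_eq_top.1 h))

theorem finite_setOf_mem_ball_eq_zero : {z ∈ ball (0 : ℂ) 1 | G z = 0}.Finite := by
  set Z := closedBall (0 : ℂ) 1 ∩ G ⁻¹' {0}
  have hZ : IsCompact Z := (isCompact_closedBall 0 1).of_isClosed_subset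
    (hGc.preimage_isClosed_of_isClosed isClosed_closedBall isClosed_singleton) inter_subset_left
  have hZball : Z ⊆ ball 0 1 := fun z ⟨hz, hGz⟩ => by
    rw [← ball_union_sphere] at hz
    exact hz.resolve_right fun h => hG1 z h hGz
  have hne : ∀ᶠ z in codiscreteWithin (ball (0 : ℂ) 1), G z ≠ 0 :=
    ((hGd.analyticOnNhd isOpen_ball).eqOn_zero_or_eventually_ne_zero_of_preconnected
      (convex_ball 0 1).isPreconnected).resolve_left
      (hGc.not_eqOn_zero_ball (by simp : (1 : ℂ) ∈ sphere 0 1) (hG1 1 (by simp)))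
  refine (hZ.finite_sdiff_of_mem_codiscreteWithin (codiscreteWithin_mono hZball hne)).subset ?_
  exact fun z ⟨hz, hGz⟩ => ⟨⟨ball_subset_closedBall hz, hGz⟩, fun h => h hGz⟩

theorem hasWindingNumber_sum_analyticOrderNatAt
    (s : Finset ℂ) (hs : ↑s ⊆ ball (0 : ℂ) 1) (hzero : ∀ z ∈ ball (0 : ℂ) 1, G z = 0 → z ∈ s) :
    HasWindingNumber G (∑ z ∈ s, (analyticOrderNatAt G z : ℤ)) := by
  induction hN : ∑ z ∈ s, analyticOrderNatAt G z using Nat.strong_induction_on generalizing G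
    with | _ N ih => ?_
  by_cases hz : ∃ z₀ ∈ ball (0 : ℂ) 1, G z₀ = 0
  · obtain ⟨z₀, hz₀, hGz₀⟩ := hz
    set G₁ := dslope G z₀
    have hfac : G = fun z => (z - z₀) * G₁ z := funext fun z => by
      rw [← smul_eq_mul, sub_smul_dslope, hGz₀, sub_zero]
    have hG₁c : ContinuousOn G₁ (closedBall 0 1) :=
      (continuousOn_dslope (mem_of_superset (isOpen_ball.mem_nhds hz₀) ball_subset_closedBall)).2
        ⟨hGc, hGd.differentiableAt (isOpen_ball.mem_nhds hz₀)⟩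
    have hG₁d : DifferentiableOn ℂ G₁ (ball 0 1) :=
      (Complex.differentiableOn_dslope (isOpen_ball.mem_nhds hz₀)).2 hGd
    have hG₁1 : ∀ z ∈ sphere (0 : ℂ) 1, G₁ z ≠ 0 := fun z hz h =>
      hG1 z hz (by rw [congrFun hfac z, h, mul_zero])
    have hzero₁ : ∀ z ∈ ball (0 : ℂ) 1, G₁ z = 0 → z ∈ s := fun z hz h =>
      hzero z hz (by rw [congrFun hfac z, h, mul_zero])
    have hsum : ∑ z ∈ s, analyticOrderNatAt G z = 1 + ∑ z ∈ s, analyticOrderNatAt G₁ z := by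
      rw [Finset.sum_congr rfl fun z hz => hfac ▸ analyticOrderNatAt_sub_mul
          (hG₁d.analyticAt (isOpen_ball.mem_nhds (hs hz)))
          (analyticOrderAt_ne_top_of_mem_ball hG₁c hG₁d hG₁1 (hs hz)),
        Finset.sum_add_distrib, Finset.sum_ite_eq' s z₀, if_pos (hzero z₀ hz₀ hGz₀)]
    have hG₁wind := ih _ (by omega) hG₁c hG₁d hG₁1 hzero₁ rfl
    rw [show ∑ z ∈ s, (analyticOrderNatAt G z : ℤ) = 1 + ∑ z ∈ s, (analyticOrderNatAt G₁ z : ℤ)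
      by exact_mod_cast hsum]
    exact ((HasWindingNumber.sub_const (mem_ball_zero_iff.1 hz₀)).mul hG₁wind).congr
      fun z _ => (congrFun hfac z).symm
  · push Not at hz
    rw [Finset.sum_eq_zero fun z hz' => by
      simp [analyticOrderNatAt, analyticOrderAt_eq_zero.2 (Or.inr (hz z (hs hz')))]]
    refine HasWindingNumber.of_continuousOn_closedBall hGc fun z hz' => ?_
    rw [← ball_union_sphere] at hz'
    exact hz'.elim (hz z) (hG1 z)

end ClosedDisc

theorem stmt18_general (f F : ℂ → ℂ)
    (hF₁ : ContinuousOn F (closedBall 0 1)) (hF₂ : DifferentiableOn ℂ F (ball 0 1))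
    (hFf : ∀ z ∈ sphere (0:ℂ) 1, F z = f z) :
    ∀ w : ℂ, 1 < ‖w‖ → ∀ P : Polynomial ℂ,
      (∀ z ∈ sphere (0:ℂ) 1, f z / (z - w) + P.eval z ≠ 0) →
      ∃ s : Finset ℂ,
        (∀ z : ℂ, z ∈ s ↔ z ∈ ball (0:ℂ) 1 ∧ F z + (z - w) * P.eval z = 0) ∧
        HasWindingNumber (fun z => f z / (z - w) + P.eval z)
          (∑ z ∈ s, (holoOrder (fun u => F u + (u - w) * P.eval u) z : ℤ)) := by
  intro w hw P hnv
  set G : ℂ → ℂ := fun u => F u + (u - w) * P.eval u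
  have hGc : ContinuousOn G (closedBall 0 1) := hF₁.add (by fun_prop)
  have hGd : DifferentiableOn ℂ G (ball 0 1) := hF₂.add (by fun_prop)
  have hw1 : ∀ z ∈ closedBall (0 : ℂ) 1, z - w ≠ 0 := fun z hz h => by
    rw [sub_eq_zero.1 h, mem_closedBall_zero_iff] at hz
    linarith
  have hquot : EqOn (fun z => G z * (z - w)⁻¹) (fun z => f z / (z - w) + P.eval z)
      (sphere 0 1) := fun z hz => by
    simp only [G, hFf z hz]
    field_simp [hw1 z (sphere_subset_closedBall hz)]
  have hG1 : ∀ z ∈ sphere (0 : ℂ) 1, G z ≠ 0 := fun z hz h =>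
    hnv z hz (by simp [← hquot hz, h])
  set s := (finite_setOf_mem_ball_eq_zero hGc hGd hG1).toFinset
  have hs : ∀ z, z ∈ s ↔ z ∈ ball (0 : ℂ) 1 ∧ G z = 0 := fun z => Set.Finite.mem_toFinset _
  refine ⟨s, hs, ?_⟩
  have hwind := (hasWindingNumber_sum_analyticOrderNatAt hGc hGd hG1 s
    (fun z hz => ((hs z).1 hz).1) fun z hz h => (hs z).2 ⟨hz, h⟩).mul
    (HasWindingNumber.of_continuousOn_closedBall ((continuousOn_id.sub continuousOn_const).inv₀ hw1)
      fun z hz => inv_ne_zero (hw1 z hz))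
  rw [add_zero] at hwind
  rw [Finset.sum_congr rfl fun z hz => by
    rw [holoOrder_eq_analyticOrderNatAt (hGd.analyticAt (isOpen_ball.mem_nhds ((hs z).1 hz).1))
      (analyticOrderAt_ne_top_of_mem_ball hGc hGd hG1 ((hs z).1 hz).1)]]
  exact hwind.congr hquot

theorem stmt18 (f F : ℂ → ℂ) (hf : ContinuousOn f (sphere (0:ℂ) 1))
    (hF₁ : ContinuousOn F (closedBall 0 1)) (hF₂ : DifferentiableOn ℂ F (ball 0 1))
    (hFf : ∀ z ∈ sphere (0:ℂ) 1, F z = f z) :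
    ∀ w : ℂ, 1 < ‖w‖ → ∀ P : Polynomial ℂ,
      (∀ z ∈ sphere (0:ℂ) 1, f z / (z - w) + P.eval z ≠ 0) →
      ∃ s : Finset ℂ,
        (∀ z : ℂ, z ∈ s ↔ z ∈ ball (0:ℂ) 1 ∧ F z + (z - w) * P.eval z = 0) ∧
        HasWindingNumber (fun z => f z / (z - w) + P.eval z)
          (∑ z ∈ s, (holoOrder (fun u => F u + (u - w) * P.eval u) z : ℤ)) :=
  stmt18_general f F hF₁ hF₂ hFf
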